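/- arXiv:1309.0603 — 2 statements merged into one kernel-verified Lean document; each statement's English description precedes it below -/
import Mathlib

section
/- Let G be a finite simple graph with a C3-free vertex x, let X = N[x] be the closed neighborhood of x, and let π be any permutation of V(G) such that π(v) = v for every v ∈ V(G) − X, π(v) ≠ v for every v ∈ X, and (when |X| ≥ 3) π has no 2-cycles inside X (if π(v) = u with u, v ∈ X then π(u) ≠ v). Then no separable γ-set of G is effective under π. -/
open SimpleGraph

variable {V : Type*}

/-- `D` is a dominating set of `G`: every vertex is in `D` or adjacent to a vertex of `D`. -/
def IsDomSet (G : SimpleGraph V) (D : Set V) : Prop :=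
  ∀ v : V, ∃ d ∈ D, d = v ∨ G.Adj d v

/-- The domination number of `G`: minimum cardinality of a dominating set. -/
noncomputable def domNum (G : SimpleGraph V) : ℕ :=
  sInf {n | ∃ D : Set V, IsDomSet G D ∧ D.ncard = n}

/-- The prism `πG` of `G`: two disjoint copies of `G` together with the matching
`{u (π u) : u ∈ V(G)}`, the second copy playing the role of `G'`. -/
def prism (G : SimpleGraph V) (π : Equiv.Perm V) : SimpleGraph (V ⊕ V) where
  Adj a b :=
    match a, b with
    | Sum.inl u, Sum.inl v => G.Adj u v
    | Sum.inr u, Sum.inr v => G.Adj u v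
    | Sum.inl u, Sum.inr v => π u = v
    | Sum.inr u, Sum.inl v => π v = u
  symm := by
    constructor
    rintro (u | u) (v | v) h
    · exact G.adj_symm h
    · exact h
    · exact h
    · exact G.adj_symm h
  loopless := by
    constructor
    rintro (u | u) h
    · exact G.loopless.irrefl u h
    · exact G.loopless.irrefl u h

/-- The closed neighborhood `N[v]` of a vertex. -/
def closedNbhd (G : SimpleGraph V) (v : V) : Set V :=
  insert v (G.neighborSet v)

/-- `x` is a `C₃`-free vertex: non-isolated and belonging to no triangle of `G`. -/
def C3Free (G : SimpleGraph V) (x : V) : Prop :=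
  (∃ y, G.Adj x y) ∧ ∀ u v : V, G.Adj x u → G.Adj x v → ¬ G.Adj u v

/-- `A = A1 ∪ A2` is a separable γ-set of `G` (an `A1`-γ-set): `A1, A2` are nonempty,
disjoint, `A` is a γ-set, and `A1` dominates `V(G) - A`. -/
def SepGammaSet (G : SimpleGraph V) (A1 A2 : Set V) : Prop :=
  A1.Nonempty ∧ A2.Nonempty ∧ Disjoint A1 A2 ∧
  IsDomSet G (A1 ∪ A2) ∧ (A1 ∪ A2).ncard = domNum G ∧
  ∀ v ∉ A1 ∪ A2, ∃ u ∈ A1, G.Adj u v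

/-- The separable γ-set `A = A1 ∪ A2` is effective under `π`: `π(A)` is a γ-set of the
copy `G'` of `G` (identified with `G`) whose dominating part is `B2' = π(A2)`,
i.e. `π(A2)` dominates `V(G') - π(A)`. -/
def Effective (G : SimpleGraph V) (π : Equiv.Perm V) (A1 A2 : Set V) : Prop :=
  IsDomSet G (⇑π '' (A1 ∪ A2)) ∧ (⇑π '' (A1 ∪ A2)).ncard = domNum G ∧
  ∀ v ∉ ⇑π '' (A1 ∪ A2), ∃ u ∈ ⇑π '' A2, G.Adj u v

/-- The star `K_{1,m}` on `Fin (m+1)`, with center `0` adjacent to the `m` leaves. -/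
def starGraph (m : ℕ) : SimpleGraph (Fin (m + 1)) where
  Adj a b := (a = 0 ∧ b ≠ 0) ∨ (b = 0 ∧ a ≠ 0)
  symm := ⟨fun a b h => Or.symm h⟩
  loopless := ⟨fun a h => by rcases h with ⟨h1, h2⟩ | ⟨h1, h2⟩ <;> exact h2 h1⟩

/-!
Write `X = N[x]` and `B = π(A)`. Both `A = A1 ∪ A2` and `B = π(A2) ∪ π(A1)` are separable
γ-sets, dominated by `A1` and `π(A2)` respectively, and the situation is symmetric under
`(A, A1, π) ↦ (B, π(A2), π⁻¹)`. Minimality forces the non-dominating part of a separable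
γ-set to have no neighbour in the set, and to contain at most one neighbour of any vertex.
As `π` moves exactly the vertices of `X`, the sets `A` and `B` agree outside `X`.

Up to the symmetry, `x` lies in `A1`, in `π(A1)`, or outside `A ∪ B`. In the first two cases
these constraints clash at once (for `π(A1)` because `x` lies in no triangle). In the last case
`x` has a neighbour `n1 ∈ A1` and, as `π(A2)` dominates `x`, a neighbour `n2 ∈ A2`; the second
constraint, applied to `A` and to `B`, gives `A ∩ X ⊆ {n1, n2}`. If `π(n1) ≠ n2`, then `n2 ∉ B`
and its `π(A2)`-neighbour lies outside `X`, hence in `A2`: a clash. If `π(n1) = n2`, then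
`π(n2) ∉ A` as `π` has no 2-cycle, and trading `A ∩ X` together with an `A1`-neighbour of
`π(n2)` for `{x, π(n2)}` gives a smaller dominating set.
-/

def MovesExactly (π : Equiv.Perm V) (S : Set V) : Prop :=
  ∀ v, π v = v ↔ v ∉ S

namespace MovesExactly

variable {π : Equiv.Perm V} {S : Set V}

theorem symm (h : MovesExactly π S) : MovesExactly π.symm S := fun v => by
  rw [Equiv.symm_apply_eq, eq_comm, h]

theorem apply_mem_iff (h : MovesExactly π S) (v : V) : π v ∈ S ↔ v ∈ S := by
  by_cases hv : v ∈ S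
  · refine iff_of_true (not_not.1 fun hπv => ?_) hv
    exact (h v).1 (π.injective ((h (π v)).2 hπv)) hv
  · rw [(h v).2 hv]

theorem mem_image_iff_of_notMem (h : MovesExactly π S) {T : Set V} {v : V} (hv : v ∉ S) :
    v ∈ π '' T ↔ v ∈ T := by
  rw [Set.mem_image_equiv, (h.symm v).2 hv]

end MovesExactly

/-- Models a separable γ-set `A = A1 ∪ A2` as the pair `(A, A1)`, with `|A| = γ` weakened to
minimality among dominating sets. -/
structure IsSepGammaPair (G : SimpleGraph V) (A P : Set V) : Prop where
  subset : P ⊆ A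
  ncard_le : ∀ D, IsDomSet G D → A.ncard ≤ D.ncard
  dominates_compl : ∀ v ∉ A, ∃ u ∈ P, G.Adj u v

theorem SepGammaSet.isSepGammaPair {G : SimpleGraph V} {A1 A2 : Set V}
    (h : SepGammaSet G A1 A2) : IsSepGammaPair G (A1 ∪ A2) A1 where
  subset := Set.subset_union_left
  ncard_le D hD := h.2.2.2.2.1 ▸ Nat.sInf_le ⟨D, hD, rfl⟩
  dominates_compl := h.2.2.2.2.2

namespace IsSepGammaPair

variable [Finite V] {G : SimpleGraph V} {A P : Set V}

theorem not_adj_of_mem_sdiff (h : IsSepGammaPair G A P) {a u : V} (ha : a ∈ A \ P)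
    (hu : u ∈ A) : ¬ G.Adj u a := by
  intro hua
  have hdom : IsDomSet G (A \ {a}) := by
    intro v
    by_cases hva : v = a
    · exact ⟨u, ⟨hu, hua.ne⟩, Or.inr (hva ▸ hua)⟩
    by_cases hvA : v ∈ A
    · exact ⟨v, ⟨hvA, hva⟩, Or.inl rfl⟩
    obtain ⟨p, hpP, hpv⟩ := h.dominates_compl v hvA
    exact ⟨p, ⟨h.subset hpP, fun hpa => ha.2 (hpa ▸ hpP)⟩, Or.inr hpv⟩
  have := h.ncard_le _ hdom
  have := Set.ncard_sdiff_singleton_add_one ha.1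
  omega

theorem eq_of_adj_of_adj (h : IsSepGammaPair G A P) {x a b : V} (ha : a ∈ A \ P)
    (hb : b ∈ A \ P) (hxa : G.Adj x a) (hxb : G.Adj x b) : a = b := by
  by_contra hab
  have hdom : IsDomSet G (insert x (A \ {a, b})) := by
    intro v
    by_cases hv : v ∈ A \ {a, b}
    · exact ⟨v, Set.mem_insert_of_mem _ hv, Or.inl rfl⟩
    by_cases hvA : v ∈ A
    · refine ⟨x, Set.mem_insert _ _, Or.inr ?_⟩
      by_cases hva : v = a
      · exact hva ▸ hxa
      · have hvb : v = b := by simpa [hvA, hva] using hv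
        exact hvb ▸ hxb
    obtain ⟨p, hpP, hpv⟩ := h.dominates_compl v hvA
    refine ⟨p, Set.mem_insert_of_mem _ ⟨h.subset hpP, ?_⟩, Or.inr hpv⟩
    rintro (rfl | rfl)
    exacts [ha.2 hpP, hb.2 hpP]
  have hab2 : ({a, b} : Set V) ⊆ A := Set.insert_subset ha.1 (Set.singleton_subset_iff.2 hb.1)
  have := h.ncard_le _ hdom
  have := Set.ncard_insert_le x (A \ {a, b})
  have hsdiff := Set.ncard_sdiff hab2
  have hle := Set.ncard_le_ncard hab2
  rw [Set.ncard_pair hab] at hsdiff hle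
  omega

end IsSepGammaPair

theorem Equiv.Perm.image_sdiff_image_sdiff (π : Equiv.Perm V) {A P : Set V} (h : P ⊆ A) :
    π '' A \ π '' (A \ P) = π '' P := by
  rw [← Set.image_sdiff π.injective, Set.sdiff_sdiff_cancel_left h]

structure IsEffectiveSepPair (G : SimpleGraph V) (π : Equiv.Perm V) (A P : Set V) : Prop where
  sep : IsSepGammaPair G A P
  sep_image : IsSepGammaPair G (π '' A) (π '' (A \ P))

theorem Effective.isEffectiveSepPair {G : SimpleGraph V} {π : Equiv.Perm V} {A1 A2 : Set V}
    (h : Effective G π A1 A2) (hsep : SepGammaSet G A1 A2) :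
    IsEffectiveSepPair G π (A1 ∪ A2) A1 where
  sep := hsep.isSepGammaPair
  sep_image.subset := Set.image_mono Set.sdiff_subset
  sep_image.ncard_le D hD := h.2.1 ▸ Nat.sInf_le ⟨D, hD, rfl⟩
  sep_image.dominates_compl := by
    rw [Set.union_sdiff_cancel_left hsep.2.2.1.le_bot]
    exact h.2.2

theorem IsEffectiveSepPair.symm {G : SimpleGraph V} {π : Equiv.Perm V} {A P : Set V}
    (h : IsEffectiveSepPair G π A P) : IsEffectiveSepPair G π.symm (π '' A) (π '' (A \ P)) where
  sep := h.sep_image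
  sep_image := by
    rw [π.image_sdiff_image_sdiff h.sep.subset, π.symm_image_image, π.symm_image_image]
    exact h.sep

theorem adj_of_mem_closedNbhd {G : SimpleGraph V} {x v : V} (hv : v ∈ closedNbhd G x)
    (hvx : v ≠ x) : G.Adj x v :=
  hv.resolve_left hvx

theorem C3Free.eq_of_adj {G : SimpleGraph V} {x u v : V} (hx : C3Free G x) (hxv : G.Adj x v)
    (hu : u ∈ closedNbhd G x) (huv : G.Adj u v) : u = x :=
  hu.elim id fun hxu => absurd huv (hx.2 u v hxu hxv)

namespace IsEffectiveSepPair

variable [Finite V] {G : SimpleGraph V} {x : V} {π : Equiv.Perm V} {A P : Set V}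

theorem notMem_sep (h : IsEffectiveSepPair G π A P) (hπ : MovesExactly π (closedNbhd G x)) :
    x ∉ P := by
  intro hxP
  have hxX : x ∈ closedNbhd G x := Set.mem_insert x _
  have hxA : x ∈ A := h.sep.subset hxP
  have hdiff : ∀ a ∈ A \ P, a ∉ closedNbhd G x := by
    rintro a ha (rfl | hxa)
    exacts [ha.2 hxP, h.sep.not_adj_of_mem_sdiff ha hxA hxa]
  have hxB : x ∈ π '' P := by
    obtain ⟨c, hcA, hcx⟩ : x ∈ π '' A := by
      by_contra hxB
      obtain ⟨_, ⟨a, ha, rfl⟩, hax⟩ := h.sep_image.dominates_compl x hxB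
      exact hdiff a ha ((hπ.apply_mem_iff a).1 (Or.inr hax.symm))
    have hcX : c ∈ closedNbhd G x := (hπ.apply_mem_iff c).1 (hcx ▸ hxX)
    exact ⟨c, not_not.1 fun hcP => hdiff c ⟨hcA, hcP⟩ hcX, hcx⟩
  have hπx : G.Adj x (π x) :=
    adj_of_mem_closedNbhd ((hπ.apply_mem_iff x).2 hxX) fun h => (hπ x).1 h hxX
  refine h.sep_image.not_adj_of_mem_sdiff ?_ ⟨x, hxA, rfl⟩ hπx.symm
  rwa [π.image_sdiff_image_sdiff h.sep.subset]

theorem notMem_image_sep (h : IsEffectiveSepPair G π A P) (hx : C3Free G x)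
    (hπ : MovesExactly π (closedNbhd G x)) : x ∉ π '' P := by
  rintro ⟨c, hcP, hcx⟩
  have hxX : x ∈ closedNbhd G x := Set.mem_insert x _
  have hxB : x ∈ π '' A \ π '' (A \ P) := by
    rw [π.image_sdiff_image_sdiff h.sep.subset]
    exact ⟨c, hcP, hcx⟩
  have hcX : c ∈ closedNbhd G x := (hπ.apply_mem_iff c).1 (hcx ▸ hxX)
  have hcx' : c ≠ x := fun hc => (hπ c).1 (hcx.trans hc.symm) hcX
  have hAX : ∀ a ∈ A, a ∈ closedNbhd G x → a = c := by
    intro a ha haX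
    by_contra hac
    have hπax : π a ≠ x := fun hax => hac (π.injective (hax.trans hcx.symm))
    have := adj_of_mem_closedNbhd ((hπ.apply_mem_iff a).2 haX) hπax
    exact h.sep_image.not_adj_of_mem_sdiff hxB ⟨a, ha, rfl⟩ this.symm
  have hcB : c ∉ π '' A := by
    rintro ⟨a, ha, hac⟩
    have haX : a ∈ closedNbhd G x := (hπ.apply_mem_iff a).1 (hac ▸ hcX)
    exact (hπ c).1 (hAX a ha haX ▸ hac) hcX
  obtain ⟨u, huQ, huc⟩ := h.sep_image.dominates_compl c hcB
  by_cases huX : u ∈ closedNbhd G x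
  · exact hxB.2 (hx.eq_of_adj (adj_of_mem_closedNbhd hcX hcx') huX huc ▸ huQ)
  · rw [hπ.mem_image_iff_of_notMem huX] at huQ
    exact h.sep.not_adj_of_mem_sdiff huQ (h.sep.subset hcP) huc.symm

theorem notMem (h : IsEffectiveSepPair G π A P) (hx : C3Free G x)
    (hπ : MovesExactly π (closedNbhd G x)) : x ∉ A := by
  intro hxA
  refine h.symm.notMem_image_sep hx hπ.symm ?_
  rw [π.symm_image_image]
  exact ⟨hxA, h.notMem_sep hπ⟩

theorem notMem_image (h : IsEffectiveSepPair G π A P) (hx : C3Free G x)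
    (hπ : MovesExactly π (closedNbhd G x)) : x ∉ π '' A := by
  intro hxB
  refine h.notMem_image_sep hx hπ ?_
  rw [← π.image_sdiff_image_sdiff h.sep.subset]
  exact ⟨hxB, h.symm.notMem_sep hπ.symm⟩

theorem false_of_exchange (h : IsEffectiveSepPair G π A P)
    (hπ : MovesExactly π (closedNbhd G x)) {u w : V}
    (hQX : ∀ z ∈ π '' (A \ P), z ∈ closedNbhd G x → z = w)
    (huP : u ∈ P) (huX : u ∉ closedNbhd G x) (huw : G.Adj u w)
    (hAX : 2 ≤ (A ∩ closedNbhd G x).ncard) : False := by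
  set X := closedNbhd G x
  have hdom : IsDomSet G (insert x (insert w ((A \ X) \ {u}))) := by
    intro v
    by_cases hvX : v ∈ X
    · exact ⟨x, Set.mem_insert _ _, hvX.imp Eq.symm id⟩
    by_cases hvu : v = u
    · exact ⟨w, Set.mem_insert_of_mem _ (Set.mem_insert _ _), Or.inr (hvu ▸ huw.symm)⟩
    by_cases hvA : v ∈ A
    · refine ⟨v, Set.mem_insert_of_mem _ (Set.mem_insert_of_mem _ ?_), Or.inl rfl⟩
      exact ⟨⟨hvA, hvX⟩, hvu⟩
    -- outside `X` the set `π(A)` agrees with `A`, so `π(A2)` dominates `v`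
    have hvB : v ∉ π '' A := by rwa [hπ.mem_image_iff_of_notMem hvX]
    obtain ⟨z, hzQ, hzv⟩ := h.sep_image.dominates_compl v hvB
    by_cases hzX : z ∈ X
    · exact ⟨w, Set.mem_insert_of_mem _ (Set.mem_insert _ _), Or.inr (hQX z hzQ hzX ▸ hzv)⟩
    rw [hπ.mem_image_iff_of_notMem hzX] at hzQ
    have hzu : z ≠ u := fun hzu => hzQ.2 (hzu ▸ huP)
    refine ⟨z, Set.mem_insert_of_mem _ (Set.mem_insert_of_mem _ ?_), Or.inr hzv⟩
    exact ⟨⟨hzQ.1, hzX⟩, hzu⟩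
  have := h.sep.ncard_le _ hdom
  have := Set.ncard_insert_le x (insert w ((A \ X) \ {u}))
  have := Set.ncard_insert_le w ((A \ X) \ {u})
  have := Set.ncard_sdiff_singleton_add_one (show u ∈ A \ X from ⟨h.sep.subset huP, huX⟩)
  have := Set.ncard_inter_add_ncard_sdiff_eq_ncard A X
  omega

theorem inter_closedNbhd_subset_pair (h : IsEffectiveSepPair G π A P)
    (hπ : MovesExactly π (closedNbhd G x)) (hxA : x ∉ A) (hxB : x ∉ π '' A) {n1 n2 : V}
    (hn1 : n1 ∈ P) (hn2 : n2 ∈ A \ P) (hxn1 : G.Adj x n1) (hxn2 : G.Adj x n2) :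
    A ∩ closedNbhd G x ⊆ {n1, n2} := by
  have hxπ : ∀ a ∈ P, a ∈ closedNbhd G x → G.Adj x (π a) := fun a ha haX =>
    adj_of_mem_closedNbhd ((hπ.apply_mem_iff a).2 haX) fun hax => hxB ⟨a, h.sep.subset ha, hax⟩
  have hπP : ∀ a ∈ P, π a ∈ π '' A \ π '' (A \ P) := fun a ha => by
    rw [π.image_sdiff_image_sdiff h.sep.subset]
    exact ⟨a, ha, rfl⟩
  rintro a ⟨ha, haX⟩
  by_cases haP : a ∈ P
  · exact Or.inl (π.injective (h.sep_image.eq_of_adj_of_adj (hπP a haP) (hπP n1 hn1)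
      (hxπ a haP haX) (hxπ n1 hn1 (Or.inr hxn1))))
  · have hxa := adj_of_mem_closedNbhd haX fun hax => hxA (hax ▸ ha)
    exact Or.inr (h.sep.eq_of_adj_of_adj ⟨ha, haP⟩ hn2 hxa hxn2)

theorem false_of_notMem_of_notMem (h : IsEffectiveSepPair G π A P) (hx : C3Free G x)
    (hπ : MovesExactly π (closedNbhd G x))
    (h2cyc : 3 ≤ (closedNbhd G x).ncard →
      ∀ u ∈ closedNbhd G x, ∀ v ∈ closedNbhd G x, π v = u → π u ≠ v)
    (hxA : x ∉ A) (hxB : x ∉ π '' A) : False := by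
  set X := closedNbhd G x
  obtain ⟨n1, hn1, hn1x⟩ := h.sep.dominates_compl x hxA
  obtain ⟨_, ⟨n2, hn2, rfl⟩, hwx⟩ := h.sep_image.dominates_compl x hxB
  have hn1X : n1 ∈ X := Or.inr hn1x.symm
  have hwX : π n2 ∈ X := Or.inr hwx.symm
  have hn2X : n2 ∈ X := (hπ.apply_mem_iff n2).1 hwX
  have hxn2 : G.Adj x n2 := adj_of_mem_closedNbhd hn2X fun hn2x => hxA (hn2x ▸ hn2.1)
  have hn12 : n1 ≠ n2 := fun hn12 => hn2.2 (hn12 ▸ hn1)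
  have hAX := h.inter_closedNbhd_subset_pair hπ hxA hxB hn1 hn2 hn1x.symm hxn2
  have hpair : ({n1, n2} : Set V) ⊆ A ∩ X :=
    Set.insert_subset ⟨h.sep.subset hn1, hn1X⟩ (Set.singleton_subset_iff.2 ⟨hn2.1, hn2X⟩)
  by_cases h21 : π n1 = n2
  · have hX3 : 3 ≤ X.ncard := by
      rw [← Set.ncard_eq_three.2 ⟨x, n1, n2, hn1x.ne.symm, hxn2.ne, hn12, rfl⟩]
      exact Set.ncard_le_ncard (Set.insert_subset (Set.mem_insert x _)
        (hpair.trans Set.inter_subset_right))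
    have hwA : π n2 ∉ A := fun hwA => (hAX ⟨hwA, hwX⟩).elim
      (h2cyc hX3 n2 hn2X n1 hn1X h21) fun hwn2 => (hπ n2).1 hwn2 hn2X
    obtain ⟨u, huP, huw⟩ := h.sep.dominates_compl _ hwA
    have huX : u ∉ X := fun huX => hxA (hx.eq_of_adj hwx.symm huX huw ▸ h.sep.subset huP)
    refine h.false_of_exchange hπ ?_ huP huX huw ?_
    · rintro _ ⟨a, ha, rfl⟩ haX
      have haX' := (hπ.apply_mem_iff a).1 haX
      rw [h.sep.eq_of_adj_of_adj ha hn2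
        (adj_of_mem_closedNbhd haX' fun hax => hxA (hax ▸ ha.1)) hxn2]
    · rw [← Set.ncard_pair hn12]
      exact Set.ncard_le_ncard hpair
  · have hn2B : n2 ∉ π '' A := by
      rintro ⟨a, ha, hae⟩
      rcases hAX ⟨ha, (hπ.apply_mem_iff a).1 (hae ▸ hn2X)⟩ with rfl | rfl
      exacts [h21 hae, (hπ a).1 hae hn2X]
    obtain ⟨z, hzQ, hzn2⟩ := h.sep_image.dominates_compl n2 hn2B
    have hzX : z ∉ X := fun hzX =>
      hxB (hx.eq_of_adj hxn2 hzX hzn2 ▸ Set.image_mono Set.sdiff_subset hzQ)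
    rw [hπ.mem_image_iff_of_notMem hzX] at hzQ
    exact h.sep.not_adj_of_mem_sdiff hn2 hzQ.1 hzn2

end IsEffectiveSepPair

/-- for a `C₃`-free vertex `x` with `X = N[x]` and a permutation `π` fixing
`V - X` pointwise, moving every vertex of `X`, and (when `|X| ≥ 3`) having no 2-cycles
inside `X`, no separable γ-set of `G` is effective under `π`. -/
theorem no_effective_sep_gamma_set [Fintype V] (G : SimpleGraph V) (x : V)
    (hx : C3Free G x) (π : Equiv.Perm V)
    (hfix : ∀ v ∉ closedNbhd G x, π v = v)
    (hmove : ∀ v ∈ closedNbhd G x, π v ≠ v)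
    (h2cyc : 3 ≤ (closedNbhd G x).ncard →
      ∀ u ∈ closedNbhd G x, ∀ v ∈ closedNbhd G x, π v = u → π u ≠ v) :
    ∀ A1 A2 : Set V, SepGammaSet G A1 A2 → ¬ Effective G π A1 A2 := by
  intro A1 A2 hsep heff
  have hπ : MovesExactly π (closedNbhd G x) := fun v => ⟨fun h hv => hmove v hv h, hfix v⟩
  have h := heff.isEffectiveSepPair hsep
  exact h.false_of_notMem_of_notMem hx hπ h2cyc (h.notMem hx hπ) (h.notMem_image hx hπ)
end

section
/- Let G be a finite simple graph, x a C3-free vertex of G with closed neighborhood X = N[x], and A = A1 ∪ A2 a separable γ-set of G with A1 dominating V(G) − A. If A ∩ X = {v} for a single vertex v and v ∈ A1, then A is not effective under any permutation π of V(G) that fixes every vertex of V(G) − X pointwise and moves every vertex of X. -/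
open SimpleGraph

variable {V : Type*}

/-!
Since `A ∩ N[x] = {v}` with `v ∈ A1`, the part `A2` avoids `N[x]`, so `π` fixes `A2` and
`π(A) = {π v} ∪ (A - N[x])`. As `π` moves `v ∈ N[x]`, this gives `v ∉ π(A)`, so `v` has to be
dominated by some `u ∈ π(A2) = A2`.
But in a separable γ-set no vertex of `A2` is adjacent to a vertex of `A`: otherwise `A - {u}`
would still dominate `G` (`A1` takes care of `V - A`, and `u` is dominated by its neighbour),
contradicting minimality.
-/

theorem domNum_le_ncard {G : SimpleGraph V} {D : Set V} (hD : IsDomSet G D) :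
    domNum G ≤ D.ncard :=
  Nat.sInf_le ⟨D, hD, rfl⟩

namespace SepGammaSet

variable {G : SimpleGraph V} {A1 A2 : Set V}

theorem isDomSet_diff_singleton (hsep : SepGammaSet G A1 A2) {u w : V} (hu : u ∈ A2)
    (hw : w ∈ A1 ∪ A2) (hwu : G.Adj w u) : IsDomSet G ((A1 ∪ A2) \ {u}) := by
  obtain ⟨-, -, hdisj, -, -, hA1dom⟩ := hsep
  have hA1 : A1 ⊆ (A1 ∪ A2) \ {u} := fun a ha =>
    ⟨Or.inl ha, fun hau => Set.disjoint_left.mp hdisj ha (hau ▸ hu)⟩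
  intro z
  by_cases hzA : z ∈ A1 ∪ A2
  · by_cases hzu : z = u
    · exact ⟨w, ⟨hw, hwu.ne⟩, Or.inr (hzu ▸ hwu)⟩
    · exact ⟨z, ⟨hzA, hzu⟩, Or.inl rfl⟩
  · obtain ⟨d, hd, hdz⟩ := hA1dom z hzA
    exact ⟨d, hA1 hd, Or.inr hdz⟩

theorem not_adj_of_mem_right [Finite V] (hsep : SepGammaSet G A1 A2) {u w : V} (hu : u ∈ A2)
    (hw : w ∈ A1 ∪ A2) : ¬ G.Adj w u := by
  intro hwu
  have hlt : ((A1 ∪ A2) \ {u}).ncard < (A1 ∪ A2).ncard :=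
    Set.ncard_sdiff_singleton_lt_of_mem (Or.inr hu)
  have hle := domNum_le_ncard (hsep.isDomSet_diff_singleton hu hw hwu)
  have hγ : (A1 ∪ A2).ncard = domNum G := hsep.2.2.2.2.1
  omega

end SepGammaSet

theorem image_eq_insert_of_inter_eq_singleton {f : V → V} {A X : Set V} {v : V}
    (hfix : ∀ w ∉ X, f w = w) (hAX : A ∩ X = {v}) : f '' A = insert (f v) (A \ X) := by
  have hdiff : f '' (A \ X) = A \ X := Set.EqOn.image_eq_self fun w hw => hfix w hw.2
  calc f '' A = f '' (A ∩ X ∪ A \ X) := by rw [Set.inter_union_sdiff]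
    _ = insert (f v) (A \ X) := by
      rw [Set.image_union, hAX, Set.image_singleton, hdiff, Set.insert_eq]

theorem case_one_vertex_in_A1_general [Fintype V] (G : SimpleGraph V) (x : V)
    (A1 A2 : Set V) (hsep : SepGammaSet G A1 A2) (v : V)
    (hAX : (A1 ∪ A2) ∩ closedNbhd G x = {v}) (hv : v ∈ A1) :
    ∀ π : Equiv.Perm V, (∀ w ∉ closedNbhd G x, π w = w) →
      (∀ w ∈ closedNbhd G x, π w ≠ w) → ¬ Effective G π A1 A2 := by
  rintro π hfix hmove ⟨-, -, hπA2dom⟩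
  have hA2X : ∀ a ∈ A2, a ∉ closedNbhd G x := fun a ha haX => by
    have hav : a ∈ (A1 ∪ A2) ∩ closedNbhd G x := ⟨Or.inr ha, haX⟩
    rw [hAX, Set.mem_singleton_iff] at hav
    exact Set.disjoint_left.mp hsep.2.2.1 hv (hav ▸ ha)
  have hπA2 : ⇑π '' A2 = A2 := Set.EqOn.image_eq_self fun a ha => hfix a (hA2X a ha)
  have hπA := image_eq_insert_of_inter_eq_singleton hfix hAX
  have hvX : v ∈ closedNbhd G x := (hAX.symm.subset (Set.mem_singleton v)).2
  have hvπA : v ∉ ⇑π '' (A1 ∪ A2) := by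
    rw [hπA]
    rintro (hv' | ⟨-, hvX'⟩)
    · exact hmove v hvX hv'.symm
    · exact hvX' hvX
  obtain ⟨u, hu, huv⟩ := hπA2dom v hvπA
  exact hsep.not_adj_of_mem_right (hπA2 ▸ hu) (Or.inl hv) huv.symm

/-- Case 1(1): if `A ∩ X = {v}` with `v ∈ A1`, then `A` is not effective
under any permutation fixing `V - X` pointwise and moving every vertex of `X`. -/
theorem case_one_vertex_in_A1 [Fintype V] (G : SimpleGraph V) (x : V) (hx : C3Free G x)
    (A1 A2 : Set V) (hsep : SepGammaSet G A1 A2) (v : V)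
    (hAX : (A1 ∪ A2) ∩ closedNbhd G x = {v}) (hv : v ∈ A1) :
    ∀ π : Equiv.Perm V, (∀ w ∉ closedNbhd G x, π w = w) →
      (∀ w ∈ closedNbhd G x, π w ≠ w) → ¬ Effective G π A1 A2 :=
  case_one_vertex_in_A1_general G x A1 A2 hsep v hAX hv
end
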